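/- Let α ∈ (0,1], let Ω be a bounded open subset of ℝⁿ of class C^{1,α} with outward unit normal ν, and let T be an invertible real n×n matrix. Then the kernel (x,y) ↦ ((x−y)ᵗ·ν(y))/|T^{−1}(x−y)|^{n}, defined off the diagonal of ∂Ω×∂Ω, belongs to K_{n−1−α, n−α, 1}(∂Ω×∂Ω), and hence also to K_{n−1−α, n−1, α}(∂Ω×∂Ω). -/

import Mathlib

open Set Metric

noncomputable section

abbrev Euc (n : ℕ) := EuclideanSpace ℝ (Fin n)

/-- The set of values `‖x-y‖^s * ‖K x y‖` over distinct points of `X × Y`. -/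
def kSet1 {n : ℕ} (X Y : Set (Euc n)) (s : ℝ) (K : Euc n → Euc n → ℂ) : Set ℝ :=
  {c | ∃ x ∈ X, ∃ y ∈ Y, x ≠ y ∧ c = ‖x - y‖ ^ s * ‖K x y‖}

/-- The set of values of the Hölder–type quotient of a kernel. -/
def kSet2 {n : ℕ} (X Y : Set (Euc n)) (s₂ s₃ : ℝ) (K : Euc n → Euc n → ℂ) : Set ℝ :=
  {c | ∃ x' ∈ X, ∃ x'' ∈ X, x' ≠ x'' ∧ ∃ y ∈ Y, 2 * ‖x' - x''‖ ≤ ‖x' - y‖ ∧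
       c = ‖x' - y‖ ^ s₂ / ‖x' - x''‖ ^ s₃ * ‖K x' y - K x'' y‖}

/-- Membership in the class `𝒦_{s₁,s₂,s₃}(X×Y)` of potential type kernels. -/
def memK {n : ℕ} (X Y : Set (Euc n)) (s₁ s₂ s₃ : ℝ) (K : Euc n → Euc n → ℂ) : Prop :=
  ContinuousOn (fun p : Euc n × Euc n => K p.1 p.2)
      ((X ×ˢ Y) \ {p : Euc n × Euc n | p.1 = p.2}) ∧
  BddAbove (kSet1 X Y s₁ K) ∧ BddAbove (kSet2 X Y s₂ s₃ K)

/-- The norm of the class `𝒦_{s₁,s₂,s₃}(X×Y)`. -/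
def kNorm {n : ℕ} (X Y : Set (Euc n)) (s₁ s₂ s₃ : ℝ) (K : Euc n → Euc n → ℂ) : ℝ :=
  sSup (kSet1 X Y s₁ K) + sSup (kSet2 X Y s₂ s₃ K)

/-- A bounded open subset of `ℝⁿ` of class `C^{1,α}`, together with its outward unit
normal field `ν`: near each boundary point, `Ω` is the sublevel set of a `C^{1,α}`
defining function with nonvanishing gradient, and `ν` is the normalized gradient. -/
def IsC1AlphaDomainWithNormal {n : ℕ} (α : ℝ) (Ω : Set (Euc n)) (ν : Euc n → Euc n) : Prop :=
  IsOpen Ω ∧ Bornology.IsBounded Ω ∧ Ω.Nonempty ∧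
  ∀ x ∈ frontier Ω, ∃ r > (0 : ℝ), ∃ f : Euc n → ℝ,
    ContDiffOn ℝ 1 f (ball x r) ∧
    (∃ c : ℝ, ∀ y ∈ ball x r, ∀ z ∈ ball x r,
        ‖fderiv ℝ f y - fderiv ℝ f z‖ ≤ c * ‖y - z‖ ^ α) ∧
    (∀ y ∈ ball x r, gradient f y ≠ 0) ∧
    Ω ∩ ball x r = {y | f y < 0} ∩ ball x r ∧
    ∀ y ∈ frontier Ω ∩ ball x r, ν y = ‖gradient f y‖⁻¹ • gradient f y

/-!
Near a boundary point, `∂Ω` is the zero set of a `C^{1,α}` defining function `f` with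
`∇f ≠ 0`, and `ν = ∇f/|∇f|`. Taylor's formula with Hölder remainder gives
`|⟨x - y, ν y⟩| ≤ c|x - y|^{1+α}`, and `ν` is `α`-Hölder; a Lebesgue number of a finite cover
of the compact set `∂Ω` makes both constants global. As `|T⁻¹v|` is comparable to `|v|`, the
kernel is `O(|x - y|^{1+α-n})`. If `2|x' - x''| ≤ |x' - y|`, then `K(x', y) - K(x'', y)` splits
into the change of the numerator, `⟨x' - x'', ν y⟩ = O(|x' - x''| |x' - y|^α)` by the two
estimates (compare `ν y` with `ν x'`), and the change of the denominator,
`O(|x' - x''| / |x' - y|^{n+1})`, against a numerator of size `O(|x' - y|^{1+α})`.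
The second class follows because `(|x' - x''| / |x' - y|)^{1-α} ≤ 1`.
-/

open scoped RealInnerProductSpace Topology

lemma Real.rpow_sub_div_rpow_sub_le {d t s₂ s₃ δ : ℝ} (ht : 0 < t) (htd : t ≤ d) (hδ : 0 ≤ δ) :
    d ^ (s₂ - δ) / t ^ (s₃ - δ) ≤ d ^ s₂ / t ^ s₃ := by
  have hd : 0 < d := ht.trans_le htd
  rw [Real.rpow_sub hd, Real.rpow_sub ht, div_div_div_eq, div_le_div_iff₀ (by positivity)
    (by positivity), mul_assoc]
  gcongr

lemma abs_inv_pow_sub_inv_pow_le {a b d m M : ℝ} (hm : 0 < m) (hd : 0 < d)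
    (ha : m * d ≤ a) (hb : m * d ≤ b) (ha' : a ≤ M * d) (hb' : b ≤ M * d) (k : ℕ) :
    |(a ^ k)⁻¹ - (b ^ k)⁻¹| ≤ k * M ^ (k - 1) / m ^ (2 * k) * |a - b| / d ^ (k + 1) := by
  cases k with
  | zero => simp
  | succ j =>
    have ha0 : 0 < a := (mul_pos hm hd).trans_le ha
    have hb0 : 0 < b := (mul_pos hm hd).trans_le hb
    have hmax : max |b| |a| ≤ M * d := by
      rw [abs_of_pos ha0, abs_of_pos hb0]; exact max_le hb' ha'
    have hMd : 0 ≤ M * d := ha0.le.trans ha'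
    have hnum : |b ^ (j + 1) - a ^ (j + 1)| ≤ |a - b| * (j + 1 : ℕ) * (M * d) ^ j := by
      rw [abs_sub_comm a b]
      exact (abs_pow_sub_pow_le b a (j + 1)).trans (by rw [Nat.add_sub_cancel]; gcongr)
    have hden : (m * d) ^ (j + 1) * (m * d) ^ (j + 1) ≤ a ^ (j + 1) * b ^ (j + 1) := by gcongr
    rw [inv_sub_inv (by positivity) (by positivity), abs_div,
      abs_of_pos (by positivity : (0 : ℝ) < a ^ (j + 1) * b ^ (j + 1))]
    calc |b ^ (j + 1) - a ^ (j + 1)| / (a ^ (j + 1) * b ^ (j + 1))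
        ≤ |a - b| * (j + 1 : ℕ) * (M * d) ^ j / ((m * d) ^ (j + 1) * (m * d) ^ (j + 1)) := by
          gcongr
      _ = (j + 1 : ℕ) * M ^ (j + 1 - 1) / m ^ (2 * (j + 1)) * |a - b| / d ^ (j + 1 + 1) := by
        rw [Nat.add_sub_cancel]
        field_simp
        ring

lemma norm_inv_norm_smul_sub_inv_norm_smul_le {E : Type*} [NormedAddCommGroup E]
    [NormedSpace ℝ E] {u v : E} (hu : u ≠ 0) (hv : v ≠ 0) :
    ‖‖u‖⁻¹ • u - ‖v‖⁻¹ • v‖ ≤ 2 * ‖u - v‖ / ‖u‖ := by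
  have hu' : 0 < ‖u‖ := norm_pos_iff.mpr hu
  have hv' : 0 < ‖v‖ := norm_pos_iff.mpr hv
  have hsplit : ‖u‖⁻¹ • u - ‖v‖⁻¹ • v = ‖u‖⁻¹ • (u - v) + (‖u‖⁻¹ - ‖v‖⁻¹) • v := by
    rw [smul_sub, sub_smul]; abel
  have hscale : ‖(‖u‖⁻¹ - ‖v‖⁻¹) • v‖ ≤ ‖u - v‖ / ‖u‖ := by
    rw [norm_smul, inv_sub_inv hu'.ne' hv'.ne', Real.norm_eq_abs, abs_div,
      abs_of_pos (mul_pos hu' hv'), norm_sub_rev u v]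
    calc |‖v‖ - ‖u‖| / (‖u‖ * ‖v‖) * ‖v‖ = |‖v‖ - ‖u‖| / ‖u‖ := by field_simp
      _ ≤ ‖v - u‖ / ‖u‖ := by gcongr; exact abs_norm_sub_norm_le v u
  calc ‖‖u‖⁻¹ • u - ‖v‖⁻¹ • v‖ ≤ ‖‖u‖⁻¹ • (u - v)‖ + ‖(‖u‖⁻¹ - ‖v‖⁻¹) • v‖ := by
        rw [hsplit]; exact norm_add_le _ _
    _ ≤ ‖u - v‖ / ‖u‖ + ‖u - v‖ / ‖u‖ := by
        gcongr
        rw [norm_smul, norm_inv, norm_norm, inv_mul_eq_div]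
    _ = 2 * ‖u - v‖ / ‖u‖ := by ring

lemma Convex.norm_image_sub_sub_fderiv_le_of_holder {E F : Type*} [NormedAddCommGroup E]
    [NormedSpace ℝ E] [NormedAddCommGroup F] [NormedSpace ℝ F] {s : Set E} (hs : Convex ℝ s) {f : E → F} {f' : E → E →L[ℝ] F}
    (hf : ∀ z ∈ s, HasFDerivWithinAt f (f' z) s z) {c α : ℝ} (hc : 0 ≤ c) (hα : 0 ≤ α)
    (hf' : ∀ y ∈ s, ∀ z ∈ s, ‖f' y - f' z‖ ≤ c * ‖y - z‖ ^ α) {x y : E} (hx : x ∈ s)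
    (hy : y ∈ s) : ‖f x - f y - f' y (x - y)‖ ≤ c * ‖x - y‖ ^ (1 + α) := by
  have hsub : segment ℝ y x ⊆ s := hs.segment_subset hy hx
  have hbound : ∀ z ∈ segment ℝ y x, ‖f' z - f' y‖ ≤ c * ‖x - y‖ ^ α := fun z hz =>
    (hf' z (hsub hz) y hy).trans (by gcongr; exact norm_sub_le_of_mem_segment hz)
  calc ‖f x - f y - f' y (x - y)‖ ≤ c * ‖x - y‖ ^ α * ‖x - y‖ :=
        (convex_segment y x).norm_image_sub_le_of_norm_hasFDerivWithin_le'
          (fun z hz => (hf z (hsub hz)).mono hsub) hbound (left_mem_segment ℝ y x)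
          (right_mem_segment ℝ y x)
    _ = c * ‖x - y‖ ^ (1 + α) := by
        rw [Real.rpow_one_add' (norm_nonneg _) (by positivity)]; ring

section Normals

variable {E : Type*} [NormedAddCommGroup E] [InnerProductSpace ℝ E] [CompleteSpace E]

lemma abs_inner_inv_norm_smul_gradient_le {s : Set E} (hs : Convex ℝ s) {f : E → ℝ}
    (hf : ∀ z ∈ s, HasFDerivWithinAt f (fderiv ℝ f z) s z) {c α m : ℝ} (hc : 0 ≤ c)
    (hα : 0 ≤ α) (hf' : ∀ y ∈ s, ∀ z ∈ s, ‖fderiv ℝ f y - fderiv ℝ f z‖ ≤ c * ‖y - z‖ ^ α)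
    (hm : 0 < m) {x y : E} (hx : x ∈ s) (hy : y ∈ s) (hfx : f x = 0) (hfy : f y = 0)
    (hmy : m ≤ ‖gradient f y‖) :
    |⟪x - y, ‖gradient f y‖⁻¹ • gradient f y⟫| ≤ c / m * ‖x - y‖ ^ (1 + α) := by
  have htaylor := hs.norm_image_sub_sub_fderiv_le_of_holder hf hc hα hf' hx hy
  rw [hfx, hfy, sub_self, zero_sub, norm_neg, Real.norm_eq_abs] at htaylor
  rw [real_inner_smul_right, real_inner_comm, gradient, InnerProductSpace.toDual_symm_apply,
    abs_mul, abs_inv, abs_norm, div_eq_inv_mul, mul_assoc]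
  gcongr
  exact hmy

lemma norm_inv_norm_smul_gradient_sub_le {f : E → ℝ} {c α m : ℝ} (hm : 0 < m) {x y : E}
    (hmx : m ≤ ‖gradient f x‖) (hy : gradient f y ≠ 0)
    (hf' : ‖fderiv ℝ f x - fderiv ℝ f y‖ ≤ c * ‖x - y‖ ^ α) :
    ‖‖gradient f x‖⁻¹ • gradient f x - ‖gradient f y‖⁻¹ • gradient f y‖ ≤
      2 * c / m * ‖x - y‖ ^ α := by
  have hgrad : ‖gradient f x - gradient f y‖ ≤ c * ‖x - y‖ ^ α := by
    rwa [gradient, gradient, ← map_sub, LinearIsometryEquiv.norm_map]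
  calc _ ≤ 2 * ‖gradient f x - gradient f y‖ / ‖gradient f x‖ :=
        norm_inv_norm_smul_sub_inv_norm_smul_le (norm_pos_iff.mp (hm.trans_le hmx)) hy
    _ ≤ 2 * (c * ‖x - y‖ ^ α) / m := by
        gcongr
        exact mul_nonneg zero_le_two ((norm_nonneg _).trans hgrad)
    _ = 2 * c / m * ‖x - y‖ ^ α := by ring

end Normals

lemma eq_zero_of_mem_frontier_of_inter_eq {X : Type*} [TopologicalSpace X] {Ω U : Set X}
    {f : X → ℝ} (hΩ : IsOpen Ω) (hU : IsOpen U) (hf : ContinuousOn f U)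
    (hsub : Ω ∩ U = {y | f y < 0} ∩ U) {y : X} (hy : y ∈ frontier Ω) (hyU : y ∈ U) :
    f y = 0 := by
  rw [hΩ.frontier_eq] at hy
  refine le_antisymm (not_lt.mp fun hpos => ?_) (not_lt.mp fun hneg => ?_)
  · have hnear : ∀ᶠ z in 𝓝 y, 0 < f z ∧ z ∈ U :=
      ((hf.continuousAt (hU.mem_nhds hyU)).eventually (lt_mem_nhds hpos)).and
        (hU.mem_nhds hyU)
    obtain ⟨z, hzΩ, hfz, hzU⟩ := ((mem_closure_iff_frequently.mp hy.1).and_eventually hnear).exists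
    have : z ∈ {y | f y < 0} ∩ U := hsub ▸ ⟨hzΩ, hzU⟩
    exact absurd this.1 (not_lt.mpr hfz.le)
  · exact hy.2 (hsub.symm ▸ ⟨hneg, hyU⟩ : y ∈ Ω ∩ U).1

lemma IsCompact.exists_le_mul_norm_sub_rpow {E : Type*} [SeminormedAddCommGroup E] {K : Set E}
    (hK : IsCompact K) {g : E → E → ℝ} {β : ℝ} (hβ : 0 ≤ β)
    (hbdd : ∃ B, ∀ x ∈ K, ∀ y ∈ K, g x y ≤ B)
    (hloc : ∀ p ∈ K, ∃ ρ > 0, ∃ c, ∀ x ∈ K ∩ ball p ρ, ∀ y ∈ K ∩ ball p ρ,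
      g x y ≤ c * ‖x - y‖ ^ β) :
    ∃ C ≥ 0, ∀ x ∈ K, ∀ y ∈ K, g x y ≤ C * ‖x - y‖ ^ β := by
  obtain ⟨B, hB⟩ := hbdd
  choose ρ hρ c hc using fun p : K => hloc p p.2
  obtain ⟨t, ht⟩ := hK.elim_finite_subcover (fun p : K => ball p.1 (ρ p)) (fun _ => isOpen_ball)
    fun x hx => mem_iUnion.mpr ⟨⟨x, hx⟩, mem_ball_self (hρ _)⟩
  obtain ⟨δ, hδ, hleb⟩ := lebesgue_number_lemma_of_metric hK
    (c := fun p : t => ball p.1.1 (ρ p)) (fun _ => isOpen_ball) fun x hx => by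
      obtain ⟨p, hp, hxp⟩ := mem_iUnion₂.mp (ht hx)
      exact mem_iUnion.mpr ⟨⟨p, hp⟩, hxp⟩
  -- near pairs lie in a common ball of the finite subcover, far pairs have `‖x - y‖ ≥ δ`
  refine ⟨∑ p ∈ t, |c p| + max B 0 / δ ^ β, by positivity, fun x hx y hy => ?_⟩
  have hsum : 0 ≤ ∑ p ∈ t, |c p| := by positivity
  rcases lt_or_ge ‖x - y‖ δ with hnear | hfar
  · obtain ⟨p, hball⟩ := hleb x hx
    have hyx : y ∈ ball x δ := by rwa [mem_ball, dist_eq_norm, norm_sub_rev]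
    have hcp : c p ≤ ∑ p ∈ t, |c p| + max B 0 / δ ^ β :=
      ((le_abs_self _).trans
        (Finset.single_le_sum (f := fun q => |c q|) (fun _ _ => abs_nonneg _) p.2)).trans
        (le_add_of_nonneg_right (by positivity))
    calc g x y ≤ c p * ‖x - y‖ ^ β :=
          hc p x ⟨hx, hball (mem_ball_self hδ)⟩ y ⟨hy, hball hyx⟩
      _ ≤ _ := by gcongr
  · calc g x y ≤ max B 0 / δ ^ β * δ ^ β := by
          rw [div_mul_cancel₀ _ (by positivity)]; exact (hB x hx y hy).trans (le_max_left _ _)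
      _ ≤ (∑ p ∈ t, |c p| + max B 0 / δ ^ β) * ‖x - y‖ ^ β := by
          gcongr
          exact le_add_of_nonneg_left hsum

def IsHolderNormal {E : Type*} [NormedAddCommGroup E] [InnerProductSpace ℝ E] (Γ : Set E)
    (ν : E → E) (α C : ℝ) : Prop :=
  ∀ x ∈ Γ, ∀ y ∈ Γ, |⟪x - y, ν y⟫| ≤ C * ‖x - y‖ ^ (1 + α) ∧ ‖ν x - ν y‖ ≤ C * ‖x - y‖ ^ α

namespace IsC1AlphaDomainWithNormal

variable {n : ℕ} {α : ℝ} {Ω : Set (Euc n)} {ν : Euc n → Euc n}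

lemma norm_eq_one (hΩ : IsC1AlphaDomainWithNormal α Ω ν) {y : Euc n} (hy : y ∈ frontier Ω) :
    ‖ν y‖ = 1 := by
  obtain ⟨r, hr, f, -, -, hgrad, -, hν⟩ := hΩ.2.2.2 y hy
  rw [hν y ⟨hy, mem_ball_self hr⟩, norm_smul, norm_inv, norm_norm,
    inv_mul_cancel₀ (norm_ne_zero_iff.mpr (hgrad y (mem_ball_self hr)))]

lemma isCompact_frontier (hΩ : IsC1AlphaDomainWithNormal α Ω ν) : IsCompact (frontier Ω) :=
  Metric.isCompact_of_isClosed_isBounded isClosed_frontier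
    (hΩ.2.1.closure.subset frontier_subset_closure)

lemma exists_isHolderNormal_inter_ball (hΩ : IsC1AlphaDomainWithNormal α Ω ν) (hα : 0 ≤ α) {p : Euc n}
    (hp : p ∈ frontier Ω) :
    ∃ ρ > 0, ∃ c, IsHolderNormal (frontier Ω ∩ ball p ρ) ν α c := by
  obtain ⟨hO, -, -, hchart⟩ := hΩ
  obtain ⟨r, hr, f, hf, ⟨c, hc⟩, hgrad, hsub, hν⟩ := hchart p hp
  have hgc : ContinuousOn (gradient f) (ball p r) :=
    (InnerProductSpace.toDual ℝ (Euc n)).symm.continuous.comp_continuousOn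
      (hf.continuousOn_fderiv_of_isOpen isOpen_ball le_rfl)
  have hp0 : 0 < ‖gradient f p‖ := norm_pos_iff.mpr (hgrad p (mem_ball_self hr))
  obtain ⟨ε, hε, hlow⟩ := Metric.eventually_nhds_iff_ball.mp
    ((hgc.continuousAt (isOpen_ball.mem_nhds (mem_ball_self hr))).norm.eventually
      (lt_mem_nhds (half_lt_self hp0)))
  set m := ‖gradient f p‖ / 2
  have hm : 0 < m := half_pos hp0
  have hρr : ball p (min ε r) ⊆ ball p r := ball_subset_ball (min_le_right _ _)
  have hρε : ball p (min ε r) ⊆ ball p ε := ball_subset_ball (min_le_left _ _)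
  set c₁ := max c 0
  have hhol : ∀ y ∈ ball p (min ε r), ∀ z ∈ ball p (min ε r),
      ‖fderiv ℝ f y - fderiv ℝ f z‖ ≤ c₁ * ‖y - z‖ ^ α := fun y hy z hz =>
    (hc y (hρr hy) z (hρr hz)).trans (by gcongr; exact le_max_left _ _)
  have hderiv : ∀ z ∈ ball p (min ε r), HasFDerivWithinAt f (fderiv ℝ f z) (ball p (min ε r)) z :=
    fun z hz => ((hf.differentiableOn one_ne_zero z (hρr hz)).differentiableAt
      (isOpen_ball.mem_nhds (hρr hz))).hasFDerivAt.hasFDerivWithinAt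
  have hzero : ∀ y ∈ frontier Ω ∩ ball p (min ε r), f y = 0 := fun y hy =>
    eq_zero_of_mem_frontier_of_inter_eq hO isOpen_ball hf.continuousOn hsub hy.1 (hρr hy.2)
  refine ⟨min ε r, lt_min hε hr, max (c₁ / m) (2 * c₁ / m), fun x hx y hy => ?_⟩
  rw [hν x ⟨hx.1, hρr hx.2⟩, hν y ⟨hy.1, hρr hy.2⟩]
  constructor
  · refine (abs_inner_inv_norm_smul_gradient_le (convex_ball _ _) hderiv (le_max_right _ _) hα
      hhol hm hx.2 hy.2 (hzero x hx) (hzero y hy) (hlow y (hρε hy.2)).le).trans ?_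
    gcongr
    exact le_max_left _ _
  · refine (norm_inv_norm_smul_gradient_sub_le hm (hlow x (hρε hx.2)).le
      (hgrad y (hρr hy.2)) (hhol x hx.2 y hy.2)).trans ?_
    gcongr
    exact le_max_right _ _

lemma exists_isHolderNormal (hΩ : IsC1AlphaDomainWithNormal α Ω ν) (hα : 0 ≤ α) :
    ∃ C ≥ 0, IsHolderNormal (frontier Ω) ν α C := by
  have hK := hΩ.isCompact_frontier
  obtain ⟨D, hD⟩ := Metric.isBounded_iff.mp hK.isBounded
  have hloc := fun p hp => hΩ.exists_isHolderNormal_inter_ball hα (p := p) hp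
  obtain ⟨C₁, hC₁, h₁⟩ := hK.exists_le_mul_norm_sub_rpow (g := fun x y => |⟪x - y, ν y⟫|)
    (by positivity : 0 ≤ 1 + α)
    ⟨D, fun x hx y hy => (abs_real_inner_le_norm _ _).trans <| by
      rw [hΩ.norm_eq_one hy, mul_one, ← dist_eq_norm]; exact hD hx hy⟩
    fun p hp => by
      obtain ⟨ρ, hρ, c, h⟩ := hloc p hp
      exact ⟨ρ, hρ, c, fun x hx y hy => (h x hx y hy).1⟩
  obtain ⟨C₂, hC₂, h₂⟩ := hK.exists_le_mul_norm_sub_rpow (g := fun x y => ‖ν x - ν y‖) hα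
    ⟨2, fun x hx y hy => (norm_sub_le _ _).trans <| by
      rw [hΩ.norm_eq_one hx, hΩ.norm_eq_one hy]; norm_num⟩
    fun p hp => by
      obtain ⟨ρ, hρ, c, h⟩ := hloc p hp
      exact ⟨ρ, hρ, c, fun x hx y hy => (h x hx y hy).2⟩
  refine ⟨max C₁ C₂, le_max_of_le_left hC₁, fun x hx y hy =>
    ⟨(h₁ x hx y hy).trans ?_, (h₂ x hx y hy).trans ?_⟩⟩ <;> gcongr
  exacts [le_max_left _ _, le_max_right _ _]

end IsC1AlphaDomainWithNormal

section Kernel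

variable {E : Type*} [NormedAddCommGroup E] [InnerProductSpace ℝ E]

lemma IsHolderNormal.continuousOn {Γ : Set E} {ν : E → E} {α C : ℝ}
    (h : IsHolderNormal Γ ν α C) (hα : 0 < α) : ContinuousOn ν Γ := by
  intro x hx
  rw [ContinuousWithinAt, tendsto_iff_norm_sub_tendsto_zero]
  have hcont : Continuous fun y => C * ‖y - x‖ ^ α :=
    continuous_const.mul ((continuous_id.sub continuous_const).norm.rpow_const
      fun _ => Or.inr hα.le)
  refine squeeze_zero' (Filter.Eventually.of_forall fun _ => norm_nonneg _)
    (eventually_nhdsWithin_of_forall fun y hy => (h y hy x hx).2) ?_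
  simpa [Real.zero_rpow hα.ne'] using (hcont.tendsto x).mono_left nhdsWithin_le_nhds

lemma IsHolderNormal.abs_inner_sub_inner_le {Γ : Set E} {ν : E → E} {α C : ℝ}
    (h : IsHolderNormal Γ ν α C) (hα : 0 ≤ α) (hC : 0 ≤ C) {x' x'' y : E} (hx' : x' ∈ Γ)
    (hx'' : x'' ∈ Γ) (hy : y ∈ Γ) (hsep : ‖x' - x''‖ ≤ ‖x' - y‖) :
    |⟪x' - y, ν y⟫ - ⟪x'' - y, ν y⟫| ≤ 2 * C * ‖x' - x''‖ * ‖x' - y‖ ^ α := by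
  have hsplit : ⟪x' - y, ν y⟫ - ⟪x'' - y, ν y⟫ =
      -⟪x'' - x', ν x'⟫ + ⟪x' - x'', ν y - ν x'⟫ := by
    rw [← inner_sub_left, ← inner_neg_left, neg_sub, ← inner_add_right, sub_sub_sub_cancel_right,
      add_sub_cancel]
  have hnormal : |⟪x'' - x', ν x'⟫| ≤ C * ‖x' - x''‖ * ‖x' - y‖ ^ α := by
    refine (h x'' hx'' x' hx').1.trans ?_
    rw [norm_sub_rev, Real.rpow_one_add' (norm_nonneg _) (by positivity), ← mul_assoc]
    gcongr
  have hholder : |⟪x' - x'', ν y - ν x'⟫| ≤ C * ‖x' - x''‖ * ‖x' - y‖ ^ α := by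
    refine (abs_real_inner_le_norm _ _).trans ?_
    rw [mul_comm C, mul_assoc, norm_sub_rev x' y]
    gcongr
    exact (h y hy x' hx').2
  rw [hsplit]
  refine (abs_add_le _ _).trans ?_
  rw [abs_neg]
  linarith

def potentialKernel (S : E →ₗ[ℝ] E) (ν : E → E) (k : ℕ) (x y : E) : ℝ :=
  ⟪x - y, ν y⟫ / ‖S (x - y)‖ ^ k

variable {S : E →ₗ[ℝ] E} {ν : E → E} {k : ℕ}

lemma continuousOn_potentialKernel (hS : Continuous S) (hS' : Function.Injective S) {Γ : Set E}
    (hν : ContinuousOn ν Γ) :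
    ContinuousOn (fun p : E × E => potentialKernel S ν k p.1 p.2)
      ((Γ ×ˢ Γ) \ {p : E × E | p.1 = p.2}) := by
  refine ContinuousOn.div ?_ ?_ fun p hp => pow_ne_zero _ ?_
  · exact (continuous_fst.sub continuous_snd).continuousOn.inner
      (hν.comp continuous_snd.continuousOn fun p hp => hp.1.2)
  · exact ((hS.comp (continuous_fst.sub continuous_snd)).norm.pow k).continuousOn
  · rw [norm_ne_zero_iff, map_ne_zero_iff S hS', sub_ne_zero]
    exact hp.2

variable {Γ : Set E} {α C m M : ℝ}

lemma IsHolderNormal.abs_potentialKernel_le (h : IsHolderNormal Γ ν α C) (hC : 0 ≤ C)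
    (hm : 0 < m) (hS : ∀ v, m * ‖v‖ ≤ ‖S v‖) {x y : E} (hx : x ∈ Γ) (hy : y ∈ Γ) (hxy : x ≠ y) :
    |potentialKernel S ν k x y| ≤ C / m ^ k * ‖x - y‖ ^ (1 + α) / ‖x - y‖ ^ k := by
  have hd : 0 < ‖x - y‖ := norm_pos_iff.mpr (sub_ne_zero.mpr hxy)
  rw [potentialKernel, abs_div, abs_pow, abs_norm]
  calc |⟪x - y, ν y⟫| / ‖S (x - y)‖ ^ k ≤ C * ‖x - y‖ ^ (1 + α) / (m * ‖x - y‖) ^ k := by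
        gcongr
        exacts [(h x hx y hy).1, hS _]
    _ = C / m ^ k * ‖x - y‖ ^ (1 + α) / ‖x - y‖ ^ k := by rw [mul_pow]; field_simp

lemma abs_inv_norm_pow_sub_inv_norm_pow_le (hm : 0 < m)
    (hS : ∀ v, m * ‖v‖ ≤ ‖S v‖ ∧ ‖S v‖ ≤ M * ‖v‖) {x' x'' y : E} (hd : 0 < ‖x' - y‖)
    (hsep : 2 * ‖x' - x''‖ ≤ ‖x' - y‖) :
    |(‖S (x' - y)‖ ^ k)⁻¹ - (‖S (x'' - y)‖ ^ k)⁻¹| ≤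
      k * (2 * M) ^ (k - 1) / (m / 2) ^ (2 * k) * (M * ‖x' - x''‖) / ‖x' - y‖ ^ (k + 1) := by
  have hde : |‖x' - y‖ - ‖x'' - y‖| ≤ ‖x' - x''‖ := by
    simpa only [sub_sub_sub_cancel_right] using abs_norm_sub_norm_le (x' - y) (x'' - y)
  have hab : |‖S (x' - y)‖ - ‖S (x'' - y)‖| ≤ M * ‖x' - x''‖ := by
    refine (abs_norm_sub_norm_le _ _).trans ?_
    rw [← map_sub, sub_sub_sub_cancel_right]
    exact (hS _).2
  obtain ⟨ha₁, ha₂⟩ := hS (x' - y)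
  obtain ⟨hb₁, hb₂⟩ := hS (x'' - y)
  obtain ⟨hde₁, hde₂⟩ := abs_le.mp hde
  have hM : 0 ≤ M := (mul_nonneg_iff_of_pos_right hd).mp
    ((mul_nonneg hm.le hd.le).trans (ha₁.trans ha₂))
  -- `‖x'' - y‖`, hence both denominators, are comparable to `‖x' - y‖`
  refine (abs_inv_pow_sub_inv_pow_le (half_pos hm) hd (M := 2 * M) (by nlinarith)
    (by nlinarith) (by nlinarith) (by nlinarith) k).trans ?_
  gcongr

lemma IsHolderNormal.exists_abs_potentialKernel_sub_le (h : IsHolderNormal Γ ν α C)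
    (hα : 0 ≤ α) (hC : 0 ≤ C) (hm : 0 < m) (hS : ∀ v, m * ‖v‖ ≤ ‖S v‖ ∧ ‖S v‖ ≤ M * ‖v‖) :
    ∃ C', ∀ x' ∈ Γ, ∀ x'' ∈ Γ, x' ≠ x'' → ∀ y ∈ Γ, 2 * ‖x' - x''‖ ≤ ‖x' - y‖ →
      |potentialKernel S ν k x' y - potentialKernel S ν k x'' y| ≤
        C' * ‖x' - x''‖ * ‖x' - y‖ ^ α / ‖x' - y‖ ^ k := by
  set L := k * (2 * M) ^ (k - 1) / (m / 2) ^ (2 * k)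
  refine ⟨2 * C / m ^ k + C * 2 ^ (1 + α) * (L * M), fun x' hx' x'' hx'' hne y hy hsep => ?_⟩
  set t := ‖x' - x''‖
  set d := ‖x' - y‖
  have hd : 0 < d := by linarith [norm_pos_iff.mpr (sub_ne_zero.mpr hne)]
  have hnum := h.abs_inner_sub_inner_le hα hC hx' hx'' hy (by linarith)
  have hfar : |⟪x'' - y, ν y⟫| ≤ C * 2 ^ (1 + α) * d ^ (1 + α) := by
    refine (h x'' hx'' y hy).1.trans ?_
    rw [mul_assoc, ← Real.mul_rpow zero_le_two hd.le]
    gcongr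
    linarith [norm_sub_le_norm_sub_add_norm_sub x'' x' y, norm_sub_rev x'' x']
  have hsplit : potentialKernel S ν k x' y - potentialKernel S ν k x'' y =
      (⟪x' - y, ν y⟫ - ⟪x'' - y, ν y⟫) * (‖S (x' - y)‖ ^ k)⁻¹ +
        ⟪x'' - y, ν y⟫ * ((‖S (x' - y)‖ ^ k)⁻¹ - (‖S (x'' - y)‖ ^ k)⁻¹) := by
    simp only [potentialKernel, div_eq_mul_inv]; ring
  rw [hsplit]
  calc _ ≤ 2 * C * t * d ^ α * ((m * d) ^ k)⁻¹ +
        C * 2 ^ (1 + α) * d ^ (1 + α) * (L * (M * t) / d ^ (k + 1)) := by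
        refine (abs_add_le _ _).trans ?_
        rw [abs_mul, abs_mul, abs_inv, abs_pow, abs_norm]
        gcongr
        · exact (hS _).1
        · exact abs_inv_norm_pow_sub_inv_norm_pow_le hm hS hd hsep
    _ = _ := by
        rw [Real.rpow_one_add' hd.le (by positivity), mul_pow, pow_succ]
        field_simp

end Kernel

lemma LinearEquiv.exists_mul_norm_le_norm_apply_le {E : Type*} [NormedAddCommGroup E]
    [NormedSpace ℝ E] [FiniteDimensional ℝ E] (T : E ≃ₗ[ℝ] E) :
    ∃ m > 0, ∃ M, ∀ v, m * ‖v‖ ≤ ‖T v‖ ∧ ‖T v‖ ≤ M * ‖v‖ := by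
  set e := T.toContinuousLinearEquiv
  refine ⟨(‖(e.symm : E →L[ℝ] E)‖ + 1)⁻¹, by positivity, ‖(e : E →L[ℝ] E)‖, fun v =>
    ⟨?_, (e : E →L[ℝ] E).le_opNorm v⟩⟩
  rw [inv_mul_le_iff₀ (by positivity)]
  calc ‖v‖ = ‖(e.symm : E →L[ℝ] E) (T v)‖ := by simp [e]
    _ ≤ ‖(e.symm : E →L[ℝ] E)‖ * ‖T v‖ := (e.symm : E →L[ℝ] E).le_opNorm _
    _ ≤ (‖(e.symm : E →L[ℝ] E)‖ + 1) * ‖T v‖ := by gcongr; linarith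

section KernelClasses

variable {n : ℕ} {X Y : Set (Euc n)}

lemma bddAbove_kSet1_ofReal {K : Euc n → Euc n → ℝ} {s β C : ℝ} {k : ℕ} (hs : s + β = k)
    (hK : ∀ x ∈ X, ∀ y ∈ Y, x ≠ y → |K x y| ≤ C * ‖x - y‖ ^ β / ‖x - y‖ ^ k) :
    BddAbove (kSet1 X Y s fun x y => (K x y : ℂ)) := by
  refine ⟨C, ?_⟩
  rintro _ ⟨x, hx, y, hy, hxy, rfl⟩
  have hd : 0 < ‖x - y‖ := norm_pos_iff.mpr (sub_ne_zero.mpr hxy)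
  rw [Complex.norm_real, Real.norm_eq_abs]
  calc ‖x - y‖ ^ s * |K x y| ≤ ‖x - y‖ ^ s * (C * ‖x - y‖ ^ β / ‖x - y‖ ^ k) := by
        gcongr; exact hK x hx y hy hxy
    _ = C := by
        rw [mul_div_assoc', mul_left_comm, ← Real.rpow_add hd, hs, Real.rpow_natCast]
        field_simp

lemma bddAbove_kSet2_one_ofReal {K : Euc n → Euc n → ℝ} {s β C : ℝ} {k : ℕ} (hs : s + β = k)
    (hK : ∀ x' ∈ X, ∀ x'' ∈ X, x' ≠ x'' → ∀ y ∈ Y, 2 * ‖x' - x''‖ ≤ ‖x' - y‖ →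
      |K x' y - K x'' y| ≤ C * ‖x' - x''‖ * ‖x' - y‖ ^ β / ‖x' - y‖ ^ k) :
    BddAbove (kSet2 X Y s 1 fun x y => (K x y : ℂ)) := by
  refine ⟨C, ?_⟩
  rintro _ ⟨x', hx', x'', hx'', hne, y, hy, hsep, rfl⟩
  have ht : 0 < ‖x' - x''‖ := norm_pos_iff.mpr (sub_ne_zero.mpr hne)
  have hd : 0 < ‖x' - y‖ := by linarith
  rw [← Complex.ofReal_sub, Complex.norm_real, Real.norm_eq_abs, Real.rpow_one]
  calc ‖x' - y‖ ^ s / ‖x' - x''‖ * |K x' y - K x'' y|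
      ≤ ‖x' - y‖ ^ s / ‖x' - x''‖ * (C * ‖x' - x''‖ * ‖x' - y‖ ^ β / ‖x' - y‖ ^ k) := by
        gcongr; exact hK x' hx' x'' hx'' hne y hy hsep
    _ = C := by
        rw [show ‖x' - y‖ ^ s / ‖x' - x''‖ * (C * ‖x' - x''‖ * ‖x' - y‖ ^ β / ‖x' - y‖ ^ k) =
          C * (‖x' - y‖ ^ s * ‖x' - y‖ ^ β) / ‖x' - y‖ ^ k by field_simp,
          ← Real.rpow_add hd, hs, Real.rpow_natCast]
        field_simp

lemma memK.sub_sub_of_nonneg {s₁ s₂ s₃ δ : ℝ} {K : Euc n → Euc n → ℂ} (h : memK X Y s₁ s₂ s₃ K)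
    (hδ : 0 ≤ δ) : memK X Y s₁ (s₂ - δ) (s₃ - δ) K := by
  obtain ⟨hcont, h₁, C, hC⟩ := h
  refine ⟨hcont, h₁, C, ?_⟩
  rintro _ ⟨x', hx', x'', hx'', hne, y, hy, hsep, rfl⟩
  have ht : 0 < ‖x' - x''‖ := norm_pos_iff.mpr (sub_ne_zero.mpr hne)
  exact (mul_le_mul_of_nonneg_right (Real.rpow_sub_div_rpow_sub_le ht (by linarith) hδ)
    (norm_nonneg _)).trans (hC ⟨x', hx', x'', hx'', hne, y, hy, hsep, rfl⟩)

end KernelClasses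

/-- If `α ∈ (0,1]`, `Ω ⊆ ℝⁿ` is a bounded open set of class `C^{1,α}` with outward
unit normal `ν` and `T` is an invertible real `n×n` matrix, then the kernel
`((x-y)ᵗ·ν(y))/|T⁻¹(x-y)|ⁿ` belongs to `𝒦_{n-1-α,n-α,1}(∂Ω×∂Ω)` and hence also to
`𝒦_{n-1-α,n-1,α}(∂Ω×∂Ω)`. -/
theorem stmt_19 {n : ℕ} (α : ℝ) (hα : α ∈ Ioc (0 : ℝ) 1)
    (Ω : Set (Euc n)) (ν : Euc n → Euc n)
    (hΩ : IsC1AlphaDomainWithNormal α Ω ν)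
    (T : Euc n ≃ₗ[ℝ] Euc n) :
    memK (frontier Ω) (frontier Ω) ((n : ℝ) - 1 - α) ((n : ℝ) - α) 1
      (fun x y => ((inner ℝ (x - y) (ν y) : ℝ) : ℂ) / ((‖T.symm (x - y)‖ ^ n : ℝ) : ℂ)) ∧
    memK (frontier Ω) (frontier Ω) ((n : ℝ) - 1 - α) ((n : ℝ) - 1) α
      (fun x y => ((inner ℝ (x - y) (ν y) : ℝ) : ℂ) / ((‖T.symm (x - y)‖ ^ n : ℝ) : ℂ)) := by
  obtain ⟨C, hC, hΓ⟩ := hΩ.exists_isHolderNormal hα.1.le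
  obtain ⟨m, hm, M, hT⟩ := T.symm.exists_mul_norm_le_norm_apply_le
  obtain ⟨C', hC'⟩ := hΓ.exists_abs_potentialKernel_sub_le (S := T.symm.toLinearMap) (k := n)
    hα.1.le hC hm hT
  have hkernel : (fun x y => ((inner ℝ (x - y) (ν y) : ℝ) : ℂ) / ((‖T.symm (x - y)‖ ^ n : ℝ) : ℂ))
      = fun x y => (potentialKernel T.symm.toLinearMap ν n x y : ℂ) := by
    ext x y
    simp [potentialKernel]
  rw [hkernel]
  have hmem : memK (frontier Ω) (frontier Ω) ((n : ℝ) - 1 - α) ((n : ℝ) - α) 1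
      fun x y => (potentialKernel T.symm.toLinearMap ν n x y : ℂ) :=
    ⟨Complex.continuous_ofReal.comp_continuousOn (continuousOn_potentialKernel
        (LinearMap.continuous_of_finiteDimensional _) T.symm.injective (hΓ.continuousOn hα.1)),
      bddAbove_kSet1_ofReal (by ring) fun x hx y hy hxy =>
        hΓ.abs_potentialKernel_le hC hm (fun v => (hT v).1) hx hy hxy,
      bddAbove_kSet2_one_ofReal (by ring) hC'⟩
  refine ⟨hmem, ?_⟩
  convert hmem.sub_sub_of_nonneg (δ := 1 - α) (by linarith [hα.2]) using 1 <;> ring
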